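/- Let n ≥ 6, t ≥ 0 with n − 7 − t ≥ 0, and let π = (d_1, d_2, 4, 3^4, 2^t, 1^{n−7−t}) be a graphic sequence of n terms with d_1 ≥ d_2 ≥ 4. If π is potentially K_{3,3}-graphic, then d_1 + d_2 ≤ n + t + 3. -/

import Mathlib

/-!
Let `u`, `v` be the vertices of degrees `d₁`, `d₂`. Each of them has at most one neighbour in
`{u, v}`, and a vertex `w ∉ {u, v}` receives at most `min (deg w) 2` edges from `{u, v}`, so
`d₁ + d₂ ≤ 2 + ∑_{w ∉ {u, v}} min (deg w) 2 = n + t + 5`. If `d₁ + d₂ > n + t + 3`, parity of the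
degree sum forces equality, hence `u` and `v` are adjacent to every other vertex of degree `≥ 2`.

At most three vertices of the graph have degree `≥ 4`, so some vertex `x ∉ {u, v}` of a copy
of `K_{3,3}` has degree exactly `3`; its neighbourhood is then its `K_{3,3}`-neighbourhood, so
`u`, `v` lie on the side opposite to `x`. The third vertex `y` of that side is then adjacent to
`u`, `v` and to its three `K_{3,3}`-neighbours, so `deg y ≥ 5`, while every vertex other than
`u`, `v` has degree at most `4`.
-/

/-- `π` is the degree sequence (as a multiset) of the simple graph `G`. -/
def IsDegSeqOf {V : Type} [Fintype V] (G : SimpleGraph V) (π : List ℕ) : Prop :=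
  Multiset.map (fun v => (G.neighborSet v).ncard) Finset.univ.val = (π : Multiset ℕ)

/-- `π` is graphic: it is realized by some simple graph on `π.length` vertices. -/
def IsGraphic (π : List ℕ) : Prop :=
  ∃ G : SimpleGraph (Fin π.length), IsDegSeqOf G π

/-- `π` is potentially `H`-graphic: some realization of `π` contains a copy of `H`
as a subgraph (an injective graph homomorphism from `H`). -/
def PotentiallyGraphic {W : Type} (H : SimpleGraph W) (π : List ℕ) : Prop :=
  ∃ G : SimpleGraph (Fin π.length), IsDegSeqOf G π ∧ ∃ f : H →g G, Function.Injective f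

/-- The complete bipartite graph `K_{3,3}`. -/
def K33 : SimpleGraph (Fin 3 ⊕ Fin 3) := completeBipartiteGraph (Fin 3) (Fin 3)

/-- `K_6 − C_6`, the complement of the 6-cycle. -/
def K6mC6 : SimpleGraph (Fin 6) := (SimpleGraph.cycleGraph 6)ᶜ

open Finset

namespace SimpleGraph

section DominatingPair

variable {V : Type*} [Fintype V] [DecidableEq V] {G : SimpleGraph V} [DecidableRel G.Adj]

lemma degree_le_card_filter_compl_pair_add_one (u v : V) :
    G.degree u ≤ #(({u, v}ᶜ : Finset V).filter (G.Adj u)) + 1 := by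
  have hsub : G.neighborFinset u ⊆ insert v (({u, v}ᶜ : Finset V).filter (G.Adj u)) := by
    intro w hw
    rw [mem_neighborFinset] at hw
    by_cases hwv : w = v
    · simp [hwv]
    · simp [hw, hwv, hw.ne']
  calc G.degree u = #(G.neighborFinset u) := (card_neighborFinset_eq_degree G u).symm
    _ ≤ _ := (card_le_card hsub).trans (card_insert_le _ _)

lemma card_filter_adj_pair_le_min (u v w : V) :
    #(({u, v} : Finset V).filter (G.Adj · w)) ≤ min (G.degree w) 2 := by
  refine le_min ?_ ((card_filter_le _ _).trans card_le_two)
  rw [← card_neighborFinset_eq_degree]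
  exact card_le_card fun x hx => by simpa using (mem_filter.mp hx).2.symm

lemma adj_of_two_add_sum_min_degree_le {u v : V} (huv : u ≠ v)
    (h : 2 + ∑ w ∈ ({u, v}ᶜ : Finset V), min (G.degree w) 2 ≤ G.degree u + G.degree v) :
    ∀ w, w ≠ u → w ≠ v → 2 ≤ G.degree w → G.Adj u w ∧ G.Adj v w := by
  intro w hwu hwv hw
  by_contra hnot
  have hu := G.degree_le_card_filter_compl_pair_add_one u v
  have hv := G.degree_le_card_filter_compl_pair_add_one v u
  rw [pair_comm] at hv
  set S : Finset V := {u, v}ᶜ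
  have hwS : w ∈ S := by simp [S, hwu, hwv]
  have hlt : #(({u, v} : Finset V).filter (G.Adj · w)) < min (G.degree w) 2 := by
    rw [min_eq_right hw, ← card_pair huv]
    refine card_lt_card (filter_ssubset.mpr ?_)
    by_cases huw : G.Adj u w
    · exact ⟨v, by simp, fun hvw => hnot ⟨huw, hvw⟩⟩
    · exact ⟨u, by simp, huw⟩
  have hsum := sum_lt_sum (fun x _ => card_filter_adj_pair_le_min u v x) ⟨w, hwS, hlt⟩
  have hcount : ∑ x ∈ {u, v}, #(S.filter (G.Adj x)) =
      ∑ w ∈ S, #(({u, v} : Finset V).filter (G.Adj · w)) :=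
    sum_card_bipartiteAbove_eq_sum_card_bipartiteBelow _
  rw [← hcount, sum_pair huv] at hsum
  omega

end DominatingPair

namespace Copy

variable {V W : Type*} [Fintype V] {G : SimpleGraph V} [DecidableRel G.Adj]
  [Fintype W] {H : SimpleGraph W} [DecidableRel H.Adj] (f : Copy H G)

lemma map_neighborFinset_subset (a : W) :
    (H.neighborFinset a).map f.toEmbedding ⊆ G.neighborFinset (f a) := by
  intro x hx
  obtain ⟨b, hb, rfl⟩ := mem_map.mp hx
  rw [mem_neighborFinset] at hb ⊢
  exact f.toHom.map_adj hb

lemma map_neighborFinset_eq_of_degree_le {a : W} (h : G.degree (f a) ≤ H.degree a) :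
    (H.neighborFinset a).map f.toEmbedding = G.neighborFinset (f a) :=
  eq_of_subset_of_card_le (f.map_neighborFinset_subset a) (by simpa using h)

lemma degree_add_two_le_of_cliqueFree [DecidableEq V] (hH : H.CliqueFree 3) {a b c d : W}
    (hab : H.Adj a b) (hac : H.Adj a c) (had : H.Adj a d) (hbc : b ≠ c)
    (hbd : G.Adj (f b) (f d)) (hcd : G.Adj (f c) (f d)) : H.degree d + 2 ≤ G.degree (f d) := by
  have hnadj : ∀ {x}, H.Adj a x → f x ∉ (H.neighborFinset d).map f.toEmbedding := by
    intro x hax hx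
    obtain ⟨y, hy, hyx⟩ := mem_map.mp hx
    rw [f.injective hyx, mem_neighborFinset] at hy
    exact isIndepSet_neighborSet_of_triangleFree H hH a hax had hy.ne' hy.symm
  have hsub : insert (f b) (insert (f c) ((H.neighborFinset d).map f.toEmbedding)) ⊆
      G.neighborFinset (f d) := by
    refine insert_subset ?_ (insert_subset ?_ (f.map_neighborFinset_subset d))
    · exact (mem_neighborFinset _ _ _).mpr hbd.symm
    · exact (mem_neighborFinset _ _ _).mpr hcd.symm
  have hb : f b ∉ insert (f c) ((H.neighborFinset d).map f.toEmbedding) := by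
    rw [mem_insert, not_or]
    exact ⟨fun h => hbc (f.injective h), hnadj hab⟩
  have := card_le_card hsub
  rwa [card_insert_of_notMem hb, card_insert_of_notMem (hnadj hac), card_map,
    card_neighborFinset_eq_degree, card_neighborFinset_eq_degree] at this

lemma succ_le_degree_of_dominating_pair [DecidableEq V] [DecidableEq W] {k : ℕ}
    (hreg : H.IsRegularOfDegree k) (hk : 3 ≤ k) (hH : H.CliqueFree 3) {u v : V} (huv : u ≠ v)
    (hdom : ∀ w, w ≠ u → w ≠ v → k ≤ G.degree w → G.Adj u w ∧ G.Adj v w)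
    (hmax : ∀ w, w ≠ u → w ≠ v → G.degree w ≤ k + 1) {a : W} (hau : f a ≠ u) (hav : f a ≠ v) :
    k + 1 ≤ G.degree (f a) := by
  by_contra! hlt
  have hk_le : ∀ x, k ≤ G.degree (f x) := fun x => hreg.degree_eq x ▸ f.degree_le x
  have hN := f.map_neighborFinset_eq_of_degree_le (a := a) (by rw [hreg.degree_eq]; omega)
  obtain ⟨hua, hva⟩ := hdom (f a) hau hav (hk_le a)
  obtain ⟨b, hb, rfl⟩ := mem_map.mp (hN ▸ (mem_neighborFinset _ _ _).mpr hua.symm)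
  obtain ⟨c, hc, rfl⟩ := mem_map.mp (hN ▸ (mem_neighborFinset _ _ _).mpr hva.symm)
  obtain ⟨d, hd⟩ : (H.neighborFinset a \ {b, c}).Nonempty := by
    rw [← card_pos]
    have := le_card_sdiff {b, c} (H.neighborFinset a)
    have := card_le_two (a := b) (b := c)
    rw [card_neighborFinset_eq_degree, hreg.degree_eq] at *
    omega
  simp only [mem_sdiff, mem_insert, mem_singleton, not_or, mem_neighborFinset] at hd hb hc
  obtain ⟨had, hdb, hdc⟩ := hd
  have hfdb : f d ≠ f b := fun h => hdb (f.injective h)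
  have hfdc : f d ≠ f c := fun h => hdc (f.injective h)
  obtain ⟨hbd, hcd⟩ := hdom (f d) hfdb hfdc (hk_le d)
  have := f.degree_add_two_le_of_cliqueFree hH hb hc had (fun h => huv (congrArg f h)) hbd hcd
  have := hmax (f d) hfdb hfdc
  rw [hreg.degree_eq] at *
  omega

end Copy

end SimpleGraph

open SimpleGraph

section DegreeSequence

variable {V : Type} [Fintype V] {G : SimpleGraph V} [DecidableRel G.Adj] {π : List ℕ}

lemma isDegSeqOf_iff : IsDegSeqOf G π ↔ univ.val.map (G.degree ·) = (π : Multiset ℕ) := by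
  have : (fun v => (G.neighborSet v).ncard) = (G.degree ·) := funext fun v => by
    rw [Set.ncard_eq_toFinset_card', ← neighborFinset_def, card_neighborFinset_eq_degree]
  rw [IsDegSeqOf, this]

lemma IsDegSeqOf.even_sum (h : IsDegSeqOf G π) : Even π.sum := by
  rw [← Multiset.sum_coe, ← isDegSeqOf_iff.mp h, ← sum_eq_multiset_sum,
    sum_degrees_eq_twice_card_edges]
  exact even_two_mul _

lemma IsDegSeqOf.exists_compl_pair [DecidableEq V] {a b : ℕ} {L : List ℕ}
    (h : IsDegSeqOf G (a :: b :: L)) : ∃ u v, u ≠ v ∧ G.degree u = a ∧ G.degree v = b ∧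
      ({u, v}ᶜ : Finset V).val.map (G.degree ·) = (L : Multiset ℕ) := by
  have h' : univ.val.map (G.degree ·) = a ::ₘ b ::ₘ (L : Multiset ℕ) := isDegSeqOf_iff.mp h
  obtain ⟨u, -, hu, hrest⟩ := (Multiset.map_eq_cons _ _ _ _).mpr h'
  obtain ⟨v, hv_mem, hv, hL⟩ := (Multiset.map_eq_cons _ _ _ _).mpr hrest
  refine ⟨u, v, fun huv => ?_, hu, hv, ?_⟩
  · rw [← huv] at hv_mem
    exact (univ.nodup.mem_erase_iff.mp hv_mem).1 rfl
  · rwa [compl_insert, compl_singleton, erase_val, erase_val, Multiset.erase_comm]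

lemma IsDegSeqOf.exists_dominating_pair [DecidableEq V] {d₁ d₂ t m : ℕ}
    (h : IsDegSeqOf G (d₁ :: d₂ :: 4 ::
      (List.replicate 4 3 ++ List.replicate t 2 ++ List.replicate m 1)))
    (hlarge : 11 + 2 * t + m ≤ d₁ + d₂) :
    ∃ u v, u ≠ v ∧ (∀ w, w ≠ u → w ≠ v → 2 ≤ G.degree w → G.Adj u w ∧ G.Adj v w) ∧
      (∀ w, w ≠ u → w ≠ v → G.degree w ≤ 4) ∧
      #(({u, v}ᶜ : Finset V).filter (4 ≤ G.degree ·)) < 4 := by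
  obtain ⟨u, v, huv, hu, hv, hrest⟩ := h.exists_compl_pair
  obtain ⟨r, hr⟩ := h.even_sum
  simp only [List.sum_cons, List.sum_append, List.sum_replicate, smul_eq_mul] at hr
  have hsum : ∑ w ∈ ({u, v}ᶜ : Finset V), min (G.degree w) 2 = 10 + 2 * t + m := by
    calc _ = ((({u, v}ᶜ : Finset V).val.map (G.degree ·)).map (min · 2)).sum := by
          rw [Multiset.map_map]; rfl
      _ = _ := by
          rw [hrest]
          simp only [Multiset.map_coe, Multiset.sum_coe, List.map_cons, List.map_append,
            List.map_replicate, List.sum_cons, List.sum_append, List.sum_replicate, smul_eq_mul]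
          norm_num
          omega
  refine ⟨u, v, huv, adj_of_two_add_sum_min_degree_le huv (by omega), fun w hwu hwv => ?_, ?_⟩
  · have hw : w ∈ ({u, v}ᶜ : Finset V) := by simp [hwu, hwv]
    have := Multiset.mem_coe.mp (hrest ▸ Multiset.mem_map_of_mem _ hw)
    simp only [List.mem_cons, List.mem_append, List.mem_replicate] at this
    omega
  · rw [card_def, filter_val, ← Multiset.countP_map, hrest]
    simp [List.countP_replicate]

end DegreeSequence

instance : DecidableRel K33.Adj := fun a b =>
  inferInstanceAs (Decidable ((a.isLeft ∧ b.isRight) ∨ (a.isRight ∧ b.isLeft)))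

lemma K33.isRegularOfDegree : K33.IsRegularOfDegree 3 := by
  unfold IsRegularOfDegree
  decide

lemma K33.cliqueFree_three : K33.CliqueFree 3 :=
  (CompleteBipartiteGraph.bicoloring _ _).colorable.cliqueFree (by simp)

lemma K33.not_isContained_of_dominating_pair {V : Type*} [Fintype V] [DecidableEq V]
    {G : SimpleGraph V} [DecidableRel G.Adj] {u v : V} (huv : u ≠ v)
    (hdom : ∀ w, w ≠ u → w ≠ v → 2 ≤ G.degree w → G.Adj u w ∧ G.Adj v w)
    (hmax : ∀ w, w ≠ u → w ≠ v → G.degree w ≤ 4)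
    (hcount : #(({u, v}ᶜ : Finset V).filter (4 ≤ G.degree ·)) < 4) : ¬K33 ⊑ G := by
  rintro ⟨f⟩
  have hfour : ∀ a, f a ≠ u → f a ≠ v → 4 ≤ G.degree (f a) := fun _ =>
    f.succ_le_degree_of_dominating_pair K33.isRegularOfDegree le_rfl K33.cliqueFree_three huv
      (fun w hwu hwv _ => hdom w hwu hwv (by omega)) hmax
  have hsub : univ.image f ⊆ {u, v} ∪ ({u, v}ᶜ : Finset V).filter (4 ≤ G.degree ·) := by
    intro x hx
    obtain ⟨a, -, rfl⟩ := mem_image.mp hx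
    by_cases hau : f a = u
    · simp [hau]
    by_cases hav : f a = v
    · simp [hav]
    simp [hau, hav, hfour a hau hav]
  have hcard := (card_le_card hsub).trans (card_union_le _ _)
  have hinj : Function.Injective f := f.injective
  rw [card_image_of_injective _ hinj, card_univ, Fintype.card_sum, Fintype.card_fin] at hcard
  have := card_le_two (a := u) (b := v)
  omega

theorem K33_necessary_condition_7_general
    (n t d₁ d₂ : ℕ) (ht : 7 + t ≤ n)
    (π : List ℕ)
    (hπ : π = [d₁, d₂, 4] ++ List.replicate 4 3 ++ List.replicate t 2 ++
          List.replicate (n - 7 - t) 1)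
    (hpot : PotentiallyGraphic K33 π) :
    d₁ + d₂ ≤ n + t + 3 := by
  classical
  obtain ⟨m, rfl⟩ : ∃ m, n = 7 + t + m := ⟨n - 7 - t, by omega⟩
  obtain rfl : π = d₁ :: d₂ :: 4 ::
      (List.replicate 4 3 ++ List.replicate t 2 ++ List.replicate m 1) := by
    simp [hπ, show 7 + t + m - 7 - t = m by omega]
  obtain ⟨G, hG, f, hf⟩ := hpot
  by_contra! hlarge
  obtain ⟨u, v, huv, hdom, hmax, hcount⟩ := hG.exists_dominating_pair (by omega)
  exact K33.not_isContained_of_dominating_pair huv hdom hmax hcount ⟨f.toCopy hf⟩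

/-- Necessity of condition (7) in Theorem 3.1: if the graphic sequence
`(d₁, d₂, 4, 3⁴, 2ᵗ, 1^{n−7−t})` is potentially `K_{3,3}`-graphic, then
`d₁ + d₂ ≤ n + t + 3`. -/
theorem K33_necessary_condition_7
    (n t d₁ d₂ : ℕ) (hn : 6 ≤ n) (ht : 7 + t ≤ n) (h12 : d₂ ≤ d₁) (h2 : 4 ≤ d₂)
    (π : List ℕ)
    (hπ : π = [d₁, d₂, 4] ++ List.replicate 4 3 ++ List.replicate t 2 ++
          List.replicate (n - 7 - t) 1)
    (hgraphic : IsGraphic π) (hpot : PotentiallyGraphic K33 π) :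
    d₁ + d₂ ≤ n + t + 3 :=
  K33_necessary_condition_7_general n t d₁ d₂ ht π hπ hpot
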